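/- Let n : ℕ and let H : Matrix (Fin (n+1)) (Fin (n+1)) T satisfy H i i = 1 for all i and H i j = 0 (i.e., +∞) whenever i > j. Then for every cut value c : Fin (n+1) and all indices i ≤ c < j, the closure entry satisfies the square-decomposition identity (H^n) i j = Σ_{p ≤ c, q > c} (H^n) i p * (H p q) * (H^n) q j, where Σ is the tropical sum (minimum over all pairs p ≤ c < q) and * is tropical multiplication (real addition). In particular the block of H^n striding the cut is determined by the two triangles (H^n below the cut and above the cut) and the single-edge block of H, i.e., Q* = T₁ Q T₂. -/

import Mathlib

/-!
As `H ≤ 1` entrywise, the powers of `H` decrease. Write `H = 1 + N` with `N` strictly upper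
triangular, hence `N ^ (n+1) = 0`; tropical addition is idempotent, so
`H ^ m = ∑_{k ≤ m} N ^ k` is stationary from `m = n` on, and `A := H ^ n` satisfies
`A * H = A * A = A`. Expanding `A = A * H * A` gives `A i j ≤` every term of the crossing sum.
Conversely, induction on `m` shows that the crossing sum lies below `(H ^ m) i j`: split off the
last step `k → j` of a path; if `k` is still beyond the cut, use the induction hypothesis and
`A ≤ A * H`, otherwise `k → j` is itself the crossing edge.
-/

open Finset

namespace Tropical

variable {α R : Type*} [LinearOrder R] [OrderTop R]

theorem sum_le_of_mem {s : Finset α} (f : α → Tropical R) {a : α} (ha : a ∈ s) :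
    ∑ x ∈ s, f x ≤ f a := by
  rw [← untrop_le_iff, Finset.untrop_sum']
  exact Finset.inf_le ha

theorem le_sum {s : Finset α} {f : α → Tropical R} {x : Tropical R}
    (h : ∀ a ∈ s, x ≤ f a) : x ≤ ∑ a ∈ s, f a := by
  rw [← untrop_le_iff, Finset.untrop_sum']
  exact Finset.le_inf fun a ha => untrop_le_iff.2 (h a ha)

theorem sum_le_sum_of_subset {s t : Finset α} (h : s ⊆ t) (f : α → Tropical R) :
    ∑ x ∈ t, f x ≤ ∑ x ∈ s, f x :=
  le_sum fun _ ha => sum_le_of_mem f (h ha)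

end Tropical

section IdempotentSemiring

variable {S : Type*} [Semiring S]

theorem add_self_of_one_add_one (h : (1 : S) + 1 = 1) (a : S) : a + a = a := by
  simpa [mul_add] using congrArg (a * ·) h

theorem one_add_pow_eq_sum_range (h : (1 : S) + 1 = 1) (x : S) (m : ℕ) :
    (1 + x) ^ m = ∑ k ∈ range (m + 1), x ^ k := by
  induction m with
  | zero => simp
  | succ m ih =>
    rw [pow_succ', ih, add_mul, one_mul, mul_sum, sum_range_succ' (fun k => x ^ k) (m + 1),
      sum_range_succ' (fun k => x ^ k) m]
    simp only [← pow_succ']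
    rw [sum_range_succ (fun k => x ^ (k + 1)) m, add_add_add_comm, add_self_of_one_add_one h]
    abel

theorem one_add_pow_succ_of_pow_eq_zero (h : (1 : S) + 1 = 1) {x : S} {n : ℕ}
    (hx : x ^ (n + 1) = 0) : (1 + x) ^ (n + 1) = (1 + x) ^ n := by
  rw [one_add_pow_eq_sum_range h, one_add_pow_eq_sum_range h, sum_range_succ, hx, add_zero]

end IdempotentSemiring

theorem pow_eq_pow_of_pow_succ_eq {M : Type*} [Monoid M] {a : M} {n m : ℕ}
    (h : a ^ (n + 1) = a ^ n) (hm : n ≤ m) : a ^ m = a ^ n := by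
  obtain ⟨k, rfl⟩ := Nat.exists_eq_add_of_le hm
  clear hm
  induction k with
  | zero => rfl
  | succ k ih =>
    rw [show n + (k + 1) = n + k + 1 by omega, pow_succ, ih, ← pow_succ, h]

namespace Matrix

theorem pow_apply_eq_zero_of_lt_add {S : Type*} [Semiring S] {n : ℕ}
    {N : Matrix (Fin n) (Fin n) S} (hN : ∀ a b, b ≤ a → N a b = 0) (m : ℕ) {a b : Fin n}
    (hab : (b : ℕ) < a + m) : (N ^ m) a b = 0 := by
  induction m generalizing b with
  | zero => exact one_apply_ne (by rintro rfl; omega)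
  | succ m ih =>
    rw [pow_succ, mul_apply]
    refine sum_eq_zero fun k _ => ?_
    by_cases hk : (k : ℕ) < a + m
    · rw [ih hk, zero_mul]
    · rw [hN k b (Fin.le_def.2 (by omega)), mul_zero]

theorem exists_eq_one_add_of_upper_unitriangular {S : Type*} [Semiring S] {n : ℕ}
    (H : Matrix (Fin n) (Fin n) S) (hdiag : ∀ i, H i i = 1) (hlow : ∀ i j, j < i → H i j = 0) :
    ∃ N : Matrix (Fin n) (Fin n) S, H = 1 + N ∧ N ^ n = 0 := by
  refine ⟨of fun a b => if a < b then H a b else 0, ?_, ?_⟩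
  · ext a b
    rcases lt_trichotomy a b with hab | rfl | hab
    · simp [one_apply_ne hab.ne, hab]
    · simp [hdiag]
    · simp [one_apply_ne hab.ne', hab.not_gt, hlow a b hab]
  · ext a b
    exact pow_apply_eq_zero_of_lt_add (fun a b hba => by simp [hba.not_gt]) n (by omega)

variable {R ι : Type*} [LinearOrderedAddCommMonoidWithTop R] [LinearOrder ι]

theorem tropical_one_add_one : (1 : Matrix ι ι (Tropical R)) + 1 = 1 := by
  ext a b
  exact Tropical.add_self _

variable [Fintype ι]

theorem pow_succ_apply_le_of_diag_le_one {H : Matrix ι ι (Tropical R)} (hdiag : ∀ a, H a a ≤ 1)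
    (m : ℕ) (a b : ι) : (H ^ (m + 1)) a b ≤ (H ^ m) a b := by
  rw [pow_succ, mul_apply]
  calc ∑ k, (H ^ m) a k * H k b ≤ (H ^ m) a b * H b b := Tropical.sum_le_of_mem _ (mem_univ b)
    _ ≤ (H ^ m) a b := mul_le_of_le_one_right' (hdiag b)

/-- The entry `(T₁ Q T₂) a b`: paths `a ⇝ p → q ⇝ b` crossing the cut `c` at the edge `p → q`. -/
def crossingSum {S : Type*} [AddCommMonoid S] [Mul S] (A H : Matrix ι ι S) (c a b : ι) : S :=
  ∑ pq ∈ univ.filter (fun pq : ι × ι => pq.1 ≤ c ∧ c < pq.2), A a pq.1 * H pq.1 pq.2 * A pq.2 b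

theorem crossingSum_le_pow_apply {A H : Matrix ι ι (Tropical R)}
    (hpow : ∀ m a b, A a b ≤ (H ^ m) a b) (hAH : A * H = A) (c : ι) (m : ℕ) {a b : ι}
    (hac : a ≤ c) (hcb : c < b) : crossingSum A H c a b ≤ (H ^ m) a b := by
  induction m generalizing b with
  | zero =>
    rw [pow_zero, one_apply_ne (by rintro rfl; exact hcb.not_ge hac)]
    exact Tropical.le_zero _
  | succ m ih =>
    rw [pow_succ, mul_apply]
    refine Tropical.le_sum fun k _ => ?_
    by_cases hk : c < k
    · have hstep (q : ι) : A q b ≤ A q k * H k b := by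
        rw [← congrFun (congrFun hAH q) b, mul_apply]
        exact Tropical.sum_le_of_mem (fun j => A q j * H j b) (mem_univ k)
      calc crossingSum A H c a b ≤ crossingSum A H c a k * H k b := by
            simp only [crossingSum, sum_mul]
            refine Tropical.le_sum fun pq hpq => ?_
            grw [Tropical.sum_le_of_mem _ hpq, hstep pq.2, ← mul_assoc]
        _ ≤ (H ^ m) a k * H k b := by grw [ih hk]
    · calc crossingSum A H c a b ≤ A a k * H k b * A b b :=
            Tropical.sum_le_of_mem _ (a := (k, b)) (by simp [not_lt.1 hk, hcb])
        _ ≤ (H ^ m) a k * H k b := by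
            grw [hpow m a k, hpow 0 b b, pow_zero, one_apply_eq, mul_one]

theorem pow_apply_eq_crossingSum {H : Matrix ι ι (Tropical R)} {n : ℕ}
    (hdiag : ∀ a, H a a ≤ 1) (hstab : H ^ (n + 1) = H ^ n) (c : ι) {a b : ι}
    (hac : a ≤ c) (hcb : c < b) : (H ^ n) a b = crossingSum (H ^ n) H c a b := by
  have hpow : ∀ m a b, (H ^ n) a b ≤ (H ^ m) a b := fun m a b => by
    rcases le_total n m with h | h
    · rw [pow_eq_pow_of_pow_succ_eq hstab h]
    · exact antitone_nat_of_succ_le (f := fun m => (H ^ m) a b)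
        (pow_succ_apply_le_of_diag_le_one hdiag · a b) h
  have hAH : H ^ n * H = H ^ n := by rw [← pow_succ, hstab]
  have hAHA : H ^ n * H * H ^ n = H ^ n := by
    rw [hAH, ← pow_add, pow_eq_pow_of_pow_succ_eq hstab (by omega)]
  refine le_antisymm ?_ (crossingSum_le_pow_apply hpow hAH c n hac hcb)
  calc (H ^ n) a b = ∑ pq : ι × ι, (H ^ n) a pq.1 * H pq.1 pq.2 * (H ^ n) pq.2 b := by
        conv_lhs => rw [← hAHA]
        simp only [mul_apply, sum_mul, Fintype.sum_prod_type]
        exact sum_comm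
    _ ≤ crossingSum (H ^ n) H c a b := Tropical.sum_le_sum_of_subset (subset_univ _) _

end Matrix

/-- Square decomposition `Q* = T₁ Q T₂` for the closure of an
upper-triangular tropical matrix with unit diagonal: for any cut `c` and
indices `i ≤ c < j`,
`(H^n) i j = Σ_{p ≤ c < q} (H^n) i p * H p q * (H^n) q j` (tropical sum). -/
theorem stmt5 (n : ℕ)
    (H : Matrix (Fin (n+1)) (Fin (n+1)) (Tropical (WithTop ℝ)))
    (hdiag : ∀ i, H i i = 1)
    (hlow : ∀ i j : Fin (n+1), j < i → H i j = 0)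
    (c : Fin (n+1)) (i j : Fin (n+1)) (hic : i ≤ c) (hcj : c < j) :
    (H ^ n) i j =
      ∑ pq ∈ Finset.univ.filter
          (fun pq : Fin (n+1) × Fin (n+1) => pq.1 ≤ c ∧ c < pq.2),
        (H ^ n) i pq.1 * H pq.1 pq.2 * (H ^ n) pq.2 j := by
  obtain ⟨N, hHN, hN⟩ := H.exists_eq_one_add_of_upper_unitriangular hdiag hlow
  have hstab : H ^ (n + 1) = H ^ n := by
    rw [hHN]
    exact one_add_pow_succ_of_pow_eq_zero Matrix.tropical_one_add_one hN
  exact Matrix.pow_apply_eq_crossingSum (fun a => (hdiag a).le) hstab c hic hcj
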